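/- Let ν be a compactly supported probability measure on ℝ, let θ ∈ ℝ, and let μ̂ be a probability measure on ℝ whose Stieltjes transform satisfies s_{μ̂}(z) = 1/(θ − s_ν(z) − z) for all z with Im z > 0. Suppose x₀ ∈ ℝ lies outside the support of ν and satisfies x₀ + s_ν(x₀) = θ. Then w'(x₀) := 1 + ∫_ℝ dν(λ)/(λ − x₀)² is strictly positive and μ̂({x₀}) = 1/w'(x₀). -/

import Mathlib

/-!
Put `z = x₀ + iε`. As `ε → 0⁺`, dominated convergence gives `-iε s_{μ̂}(z) → μ̂({x₀})`. On the
other side, the fixed-point equation turns the denominator into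
`θ - s_ν(z) - z = s_ν(x₀) - s_ν(z) - iε`, and `s_ν` is holomorphic near `x₀` with
`s_ν'(x₀) = ∫ dν(λ)/(λ - x₀)²` because `x₀` is at positive distance from the support of `ν`.
Hence `-iε / (θ - s_ν(z) - z) = 1 / ((s_ν(z) - s_ν(x₀))/(iε) + 1) → 1 / (s_ν'(x₀) + 1)`.
-/

open MeasureTheory Filter

/-- The Stieltjes transform of a finite measure on `ℝ`. -/
noncomputable def stieltjesTransform (ν : Measure ℝ) (z : ℂ) : ℂ :=
  ∫ x : ℝ, ((x : ℂ) - z)⁻¹ ∂ν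

open Complex Topology

lemma ae_le_dist_of_measure_ball_eq_zero {α : Type*} [PseudoMetricSpace α] [MeasurableSpace α]
    {ν : Measure α} {x : α} {δ : ℝ} (h : ν (Metric.ball x δ) = 0) :
    ∀ᵐ y ∂ν, δ ≤ dist y x := by
  filter_upwards [measure_eq_zero_iff_ae_notMem.1 h] with y hy
  simpa [Metric.mem_ball] using hy

lemma stieltjesTransform_ofReal (ν : Measure ℝ) (x : ℝ) :
    stieltjesTransform ν x = ((∫ l, (l - x)⁻¹ ∂ν : ℝ) : ℂ) := by
  rw [stieltjesTransform, ← integral_complex_ofReal]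
  push_cast
  rfl

lemma hasDerivAt_stieltjesTransform {ν : Measure ℝ} [IsFiniteMeasure ν] {z : ℂ} {δ : ℝ}
    (hδ : 0 < δ) (hν : ∀ᵐ l : ℝ ∂ν, δ ≤ ‖(l : ℂ) - z‖) :
    HasDerivAt (stieltjesTransform ν) (∫ l, (((l : ℂ) - z) ^ 2)⁻¹ ∂ν) z := by
  have hfar : ∀ᵐ l : ℝ ∂ν, ∀ w ∈ Metric.ball z (δ / 2), δ / 2 ≤ ‖(l : ℂ) - w‖ :=
    hν.mono fun l hl w hw => by
      have := norm_sub_le_norm_sub_add_norm_sub (l : ℂ) w z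
      rw [Metric.mem_ball, dist_eq_norm] at hw
      linarith
  refine (hasDerivAt_integral_of_dominated_loc_of_deriv_le (bound := fun _ => ((δ / 2) ^ 2)⁻¹)
    (F := fun w (l : ℝ) => ((l : ℂ) - w)⁻¹) (F' := fun w (l : ℝ) => (((l : ℂ) - w) ^ 2)⁻¹)
    (Metric.ball_mem_nhds z (half_pos hδ)) ?_ ?_ ?_ ?_
    (integrable_const (μ := ν) _) ?_).2
  · exact Eventually.of_forall fun w => by fun_prop
  · refine (integrable_const (δ / 2)⁻¹).mono' (by fun_prop) ?_
    filter_upwards [hfar] with l hl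
    rw [norm_inv]
    exact inv_anti₀ (half_pos hδ) (hl z (Metric.mem_ball_self (half_pos hδ)))
  · fun_prop
  · filter_upwards [hfar] with l hl w hw
    rw [norm_inv, norm_pow]
    exact inv_anti₀ (by positivity) (pow_le_pow_left₀ (half_pos hδ).le (hl w hw) 2)
  · filter_upwards [hfar] with l hl w hw
    have hne : (l : ℂ) - w ≠ 0 := norm_pos_iff.1 ((half_pos hδ).trans_le (hl w hw))
    have := ((hasDerivAt_id w).const_sub (l : ℂ)).inv hne
    simp only [id_eq, neg_neg, one_div] at this
    exact this

lemma HasDerivAt.tendsto_slope_mul_I {f : ℂ → ℂ} {f' x : ℂ} (hf : HasDerivAt f f' x) :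
    Tendsto (fun ε : ℝ => (f (x + ε * I) - f x) / (ε * I)) (𝓝[>] 0) (𝓝 f') := by
  have hI : Tendsto (fun ε : ℝ => (ε : ℂ) * I) (𝓝[>] 0) (𝓝[≠] 0) := by
    refine tendsto_nhdsWithin_iff.2 ⟨?_, eventually_nhdsWithin_of_forall fun ε hε => ?_⟩
    · exact tendsto_nhdsWithin_of_tendsto_nhds
        (by simpa using (continuous_ofReal.mul_const I).tendsto 0)
    · simpa using (ne_of_gt hε)
  refine ((hasDerivAt_iff_tendsto_slope_zero.1 hf).comp hI).congr fun ε => ?_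
  simp [div_eq_inv_mul]

lemma tendsto_neg_mul_inv_of_hasDerivAt {f : ℂ → ℂ} {f' x : ℂ} (hf : HasDerivAt f f' x)
    (hf' : f' + 1 ≠ 0) :
    Tendsto (fun ε : ℝ => -(ε * I) * (x + f x - f (x + ε * I) - (x + ε * I))⁻¹) (𝓝[>] 0)
      (𝓝 (f' + 1)⁻¹) := by
  refine ((hf.tendsto_slope_mul_I.add_const 1).inv₀ hf').congr' ?_
  filter_upwards [self_mem_nhdsWithin] with ε (hε : 0 < ε)
  have hε0 : (ε : ℂ) ≠ 0 := by exact_mod_cast hε.ne'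
  have hεI : (ε : ℂ) * I ≠ 0 := mul_ne_zero hε0 I_ne_zero
  have hsplit : x + f x - f (x + ε * I) - (x + ε * I)
      = -(ε * I) * ((f (x + ε * I) - f x) / (ε * I) + 1) := by
    field_simp
    ring
  rw [hsplit, mul_inv, ← mul_assoc, mul_inv_cancel₀ (neg_ne_zero.2 hεI), one_mul]

lemma tendsto_neg_mul_stieltjesTransform (μ : Measure ℝ) [IsFiniteMeasure μ] (x : ℝ) :
    Tendsto (fun ε : ℝ => -(ε * I) * stieltjesTransform μ (x + ε * I)) (𝓝[>] 0)
      (𝓝 (μ.real {x})) := by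
  simp only [stieltjesTransform, ← integral_const_mul]
  have hlim : ∫ l, ({x} : Set ℝ).indicator (fun _ => (1 : ℂ)) l ∂μ = μ.real {x} := by
    rw [integral_indicator_const _ (measurableSet_singleton x), real_smul, mul_one]
  rw [← hlim]
  refine tendsto_integral_filter_of_dominated_convergence (fun _ => 1)
    (Eventually.of_forall fun ε => by fun_prop) ?_ (integrable_const 1) ?_
  · filter_upwards [self_mem_nhdsWithin] with ε (hε : 0 < ε)
    refine Eventually.of_forall fun l => ?_
    have hIm : ε ≤ ‖(l : ℂ) - (x + ε * I)‖ := by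
      simpa [abs_of_pos hε] using abs_im_le_norm ((l : ℂ) - (x + ε * I))
    rw [norm_mul, norm_inv, norm_neg, norm_mul, norm_I, mul_one, norm_real,
      Real.norm_of_nonneg hε.le]
    exact mul_inv_le_one_of_le₀ hIm (norm_nonneg _)
  · refine Eventually.of_forall fun l => ?_
    by_cases hl : l = x
    · subst hl
      rw [Set.indicator_of_mem (Set.mem_singleton l)]
      refine tendsto_const_nhds.congr' ?_
      filter_upwards [self_mem_nhdsWithin] with ε (hε : 0 < ε)
      have hεI : (ε : ℂ) * I ≠ 0 := mul_ne_zero (by exact_mod_cast hε.ne') I_ne_zero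
      rw [show (l : ℂ) - (l + ε * I) = -(ε * I) by ring, mul_inv_cancel₀ (neg_ne_zero.2 hεI)]
    · have hne : (l : ℂ) - x ≠ 0 := sub_ne_zero.2 (by exact_mod_cast hl)
      have hc : ContinuousAt (fun ε : ℝ => -(ε * I) * ((l : ℂ) - (x + ε * I))⁻¹) 0 :=
        ContinuousAt.mul (by fun_prop) (ContinuousAt.inv₀ (by fun_prop) (by simpa using hne))
      simpa [hl] using hc.tendsto.mono_left nhdsWithin_le_nhds

theorem atom_of_outlier_general (ν μhat : Measure ℝ)
    [IsProbabilityMeasure ν] [IsProbabilityMeasure μhat]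
    (θ x₀ : ℝ)
    (hout : ∃ ε > 0, ν (Metric.ball x₀ ε) = 0)
    (hst : ∀ z : ℂ, 0 < z.im →
      stieltjesTransform μhat z = ((θ : ℂ) - stieltjesTransform ν z - z)⁻¹)
    (hfix : x₀ + ∫ l, (l - x₀)⁻¹ ∂ν = θ) :
    0 < 1 + ∫ l, ((l - x₀) ^ 2)⁻¹ ∂ν ∧
      μhat {x₀} = ENNReal.ofReal (1 / (1 + ∫ l, ((l - x₀) ^ 2)⁻¹ ∂ν)) := by
  obtain ⟨δ, hδ, hball⟩ := hout
  set J := ∫ l, ((l - x₀) ^ 2)⁻¹ ∂ν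
  have hJ : 0 < 1 + J := by
    have : 0 ≤ J := integral_nonneg fun l => by positivity
    linarith
  refine ⟨hJ, ?_⟩
  have hν : ∀ᵐ l : ℝ ∂ν, δ ≤ ‖(l : ℂ) - x₀‖ := by
    filter_upwards [ae_le_dist_of_measure_ball_eq_zero hball] with l hl
    rwa [← ofReal_sub, norm_real, Real.norm_eq_abs, ← Real.dist_eq]
  have hderiv : HasDerivAt (stieltjesTransform ν) (J : ℂ) x₀ := by
    convert hasDerivAt_stieltjesTransform hδ hν using 1
    rw [← integral_complex_ofReal]
    push_cast
    rfl
  have hθ : (θ : ℂ) = x₀ + stieltjesTransform ν x₀ := by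
    rw [stieltjesTransform_ofReal, ← hfix]
    push_cast
    rfl
  have hsubord : Tendsto (fun ε : ℝ => -(ε * I) * stieltjesTransform μhat (x₀ + ε * I))
      (𝓝[>] 0) (𝓝 ((J : ℂ) + 1)⁻¹) := by
    refine (tendsto_neg_mul_inv_of_hasDerivAt hderiv ?_).congr' ?_
    · exact_mod_cast (add_comm J 1 ▸ hJ).ne'
    · filter_upwards [self_mem_nhdsWithin] with ε (hε : 0 < ε)
      rw [hst _ (by simpa using hε), hθ]
  have hatom : μhat.real {x₀} = 1 / (1 + J) := by
    have := tendsto_nhds_unique (tendsto_neg_mul_stieltjesTransform μhat x₀) hsubord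
    rw [one_div, add_comm]
    exact_mod_cast this
  rw [← hatom, ofReal_measureReal]

/-- Let `ν` be a compactly supported probability measure on `ℝ`, `θ ∈ ℝ`, and `μ̂` a
probability measure whose Stieltjes transform satisfies
`s_{μ̂}(z) = 1/(θ - s_ν(z) - z)` on the upper half-plane. If `x₀` lies outside the
support of `ν` and `x₀ + s_ν(x₀) = θ`, then `w'(x₀) = 1 + ∫ dν(λ)/(λ - x₀)² > 0`
and `μ̂({x₀}) = 1 / w'(x₀)`. -/
theorem atom_of_outlier (ν μhat : Measure ℝ)
    [IsProbabilityMeasure ν] [IsProbabilityMeasure μhat]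
    (hνcpt : ∃ K : Set ℝ, IsCompact K ∧ ν Kᶜ = 0)
    (θ x₀ : ℝ)
    (hout : ∃ ε > 0, ν (Metric.ball x₀ ε) = 0)
    (hst : ∀ z : ℂ, 0 < z.im →
      stieltjesTransform μhat z = ((θ : ℂ) - stieltjesTransform ν z - z)⁻¹)
    (hfix : x₀ + ∫ l, (l - x₀)⁻¹ ∂ν = θ) :
    0 < 1 + ∫ l, ((l - x₀) ^ 2)⁻¹ ∂ν ∧
      μhat {x₀} = ENNReal.ofReal (1 / (1 + ∫ l, ((l - x₀) ^ 2)⁻¹ ∂ν)) :=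
  atom_of_outlier_general ν μhat θ x₀ hout hst hfix
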